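/- Let t ≥ 1 and s ≥ 0 be integers, and let x, y ∈ Σ_q^n be sequences of the same length n such that B_{t,s}(x) ∩ B_{t,s}(y) ≠ ∅. Then there exist an integer m with 1 ≤ m ≤ 2t + 2s − 1 and partitions x = x^(1) x^(2) ⋯ x^(m) and y = y^(1) y^(2) ⋯ y^(m) into consecutive substrings such that for every i ∈ [1, m], |x^(i)| = |y^(i)| and D_t(x^(i)) ∩ D_t(y^(i)) ≠ ∅. -/

import Mathlib

open Finset

/-- `y` is obtained from `x` by exactly `t` deletions. -/
def delBall (t : ℕ) (x : List ℕ) : Set (List ℕ) :=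
  {y | y.Sublist x ∧ y.length + t = x.length}

/-- `z` is obtained from `y` by `s` substitutions over the alphabet `{0, …, q-1}`
(trivial substitutions are allowed, so this is Hamming distance at most `s`). -/
def subBall (q s : ℕ) (y : List ℕ) : Set (List ℕ) :=
  {z | z.length = y.length ∧ (∀ a ∈ z, a < q) ∧
    (y.zip z).countP (fun p => p.1 != p.2) ≤ s}

/-- The `t`-deletion `s`-substitution ball `B_{t,s}(x)` over the alphabet `{0, …, q-1}`. -/
def ball (q t s : ℕ) (x : List ℕ) : Set (List ℕ) :=
  {z | ∃ y ∈ delBall t x, z ∈ subBall q s y}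

/-- The `≤ t`-burst-deletion ball `D_t(x)`: delete a substring of length at most `t`. -/
def burstBall (t : ℕ) (x : List ℕ) : Set (List ℕ) :=
  {y | ∃ i t', t' ≤ t ∧ y = x.take i ++ x.drop (i + t')}

/-- All nonzero entries of `z` share the same sign. -/
def sameSign (z : List ℤ) : Prop := (∀ a ∈ z, 0 ≤ a) ∨ (∀ a ∈ z, a ≤ 0)

/-- The sign-preserving number `σ(z)`: the smallest positive `k` such that `z` can be
partitioned into `k` consecutive substrings, each with all nonzero entries of the same sign. -/
noncomputable def sigmaNum (z : List ℤ) : ℕ :=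
  sInf {k | 0 < k ∧ ∃ parts : List (List ℤ),
    parts.length = k ∧ parts.flatten = z ∧ ∀ p ∈ parts, sameSign p}

/-- The `k`-th order VT syndrome `VT^k(z) = ∑_{i=1}^n i^k z_i`. -/
def VT (k : ℕ) (z : List ℤ) : ℤ :=
  ∑ i ∈ Finset.range z.length, ((i : ℤ) + 1) ^ k * z.getD i 0

/-- The accumulative sequence `f(x)`, with `f(x)_i = ∑_{j=1}^i x_j`. -/
def facc (x : List ℕ) : List ℤ :=
  (List.range x.length).map (fun i => ∑ j ∈ Finset.range (i + 1), (x.getD j 0 : ℤ))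

/-- The differential sequence `d(x)`, with `d(x)_i = x_i - x_{i-1} (mod q)` and `x_0 = 0`. -/
def diffSeq (q : ℕ) (x : List ℕ) : List ℤ :=
  (List.range x.length).map (fun i =>
    ((x.getD i 0 : ℤ) - (if i = 0 then 0 else (x.getD (i - 1) 0 : ℤ))) % (q : ℤ))

/-- The accumulative differential sequence `g(x)`, with `g(x)_i = ∑_{j=1}^i d(x)_j`. -/
def gacc (q : ℕ) (x : List ℕ) : List ℤ :=
  (List.range x.length).map (fun i => ∑ j ∈ Finset.range (i + 1), (diffSeq q x).getD j 0)

/-- A binary sequence is `t`-good if any two ones are at distance at least `t`. -/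
def tGood (t : ℕ) (x : List ℕ) : Prop :=
  ∀ i j, i < j → j < x.length → x.getD i 0 = 1 → x.getD j 0 = 1 → t ≤ j - i

/-- A sequence is `t`-valid if any two nonzero entries are at distance at least `t + 1`. -/
def tValid (t : ℕ) (x : List ℕ) : Prop :=
  ∀ i j, i < j → j < x.length → x.getD i 0 ≠ 0 → x.getD j 0 ≠ 0 → t + 1 ≤ j - i

namespace Stmt0Aux
inductive Mv where
  | mat (c : ℕ) | mis (c c' : ℕ) | insX (c : ℕ) | insY (c : ℕ)
deriving DecidableEq
open Mv
def px : List Mv → List ℕ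
  | [] => []
  | mat c :: M => c :: px M
  | mis c _ :: M => c :: px M
  | insX c :: M => c :: px M
  | insY _ :: M => px M
def py : List Mv → List ℕ
  | [] => []
  | mat c :: M => c :: py M
  | mis _ c' :: M => c' :: py M
  | insX _ :: M => py M
  | insY c :: M => c :: py M
def isX : Mv → Bool | insX _ => true | _ => false
def isY : Mv → Bool | insY _ => true | _ => false
def ismis : Mv → Bool | mis _ _ => true | _ => false
def dX (M : List Mv) : ℕ := M.countP isX
def dY (M : List Mv) : ℕ := M.countP isY
def eM (M : List Mv) : ℕ := M.countP ismis
def hX : List Mv → Bool | insX _ :: _ => true | _ => false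
def hY : List Mv → Bool | insY _ :: _ => true | _ => false
def hMat : List Mv → Bool | mat _ :: _ => true | _ => false
def rX : List Mv → ℕ
  | [] => 0
  | m :: M => rX M + (if isX m && !hX M then 1 else 0)
def rY : List Mv → ℕ
  | [] => 0
  | m :: M => rY M + (if isY m && !hY M then 1 else 0)
def Phi (M : List Mv) : ℕ := rX M + rY M + eM M
def Xi (M : List Mv) : ℕ := Phi M + (if hX M then 0 else 1)

-- cons computation lemmas
@[simp] lemma rX_mat (c M) : rX (mat c :: M) = rX M := by simp [rX, isX]
@[simp] lemma rX_mis (c c' M) : rX (mis c c' :: M) = rX M := by simp [rX, isX]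
@[simp] lemma rX_insY (c M) : rX (insY c :: M) = rX M := by simp [rX, isX]
@[simp] lemma rX_insX (c M) : rX (insX c :: M) = rX M + (if hX M then 0 else 1) := by
  simp [rX, isX]; cases hX M <;> simp
@[simp] lemma rY_mat (c M) : rY (mat c :: M) = rY M := by simp [rY, isY]
@[simp] lemma rY_mis (c c' M) : rY (mis c c' :: M) = rY M := by simp [rY, isY]
@[simp] lemma rY_insX (c M) : rY (insX c :: M) = rY M := by simp [rY, isY]
@[simp] lemma rY_insY (c M) : rY (insY c :: M) = rY M + (if hY M then 0 else 1) := by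
  simp [rY, isY]; cases hY M <;> simp
@[simp] lemma eM_mat (c M) : eM (mat c :: M) = eM M := by simp [eM, List.countP_cons, ismis]
@[simp] lemma eM_mis (c c' M) : eM (mis c c' :: M) = eM M + 1 := by
  simp [eM, List.countP_cons, ismis]
@[simp] lemma eM_insX (c M) : eM (insX c :: M) = eM M := by simp [eM, List.countP_cons, ismis]
@[simp] lemma eM_insY (c M) : eM (insY c :: M) = eM M := by simp [eM, List.countP_cons, ismis]
@[simp] lemma dX_mat (c M) : dX (mat c :: M) = dX M := by simp [dX, List.countP_cons, isX]
@[simp] lemma dX_mis (c c' M) : dX (mis c c' :: M) = dX M := by simp [dX, List.countP_cons, isX]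
@[simp] lemma dX_insX (c M) : dX (insX c :: M) = dX M + 1 := by simp [dX, List.countP_cons, isX]
@[simp] lemma dX_insY (c M) : dX (insY c :: M) = dX M := by simp [dX, List.countP_cons, isX]
@[simp] lemma dY_mat (c M) : dY (mat c :: M) = dY M := by simp [dY, List.countP_cons, isY]
@[simp] lemma dY_mis (c c' M) : dY (mis c c' :: M) = dY M := by simp [dY, List.countP_cons, isY]
@[simp] lemma dY_insX (c M) : dY (insX c :: M) = dY M := by simp [dY, List.countP_cons, isY]
@[simp] lemma dY_insY (c M) : dY (insY c :: M) = dY M + 1 := by simp [dY, List.countP_cons, isY]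

@[simp] lemma px_mat (c M) : px (mat c :: M) = c :: px M := rfl
@[simp] lemma px_mis (c c' M) : px (mis c c' :: M) = c :: px M := rfl
@[simp] lemma px_insX (c M) : px (insX c :: M) = c :: px M := rfl
@[simp] lemma px_insY (c M) : px (insY c :: M) = px M := rfl
@[simp] lemma py_mat (c M) : py (mat c :: M) = c :: py M := rfl
@[simp] lemma py_mis (c c' M) : py (mis c c' :: M) = c' :: py M := rfl
@[simp] lemma py_insX (c M) : py (insX c :: M) = py M := rfl
@[simp] lemma py_insY (c M) : py (insY c :: M) = c :: py M := rfl
@[simp] lemma px_nil : px [] = [] := rfl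
@[simp] lemma py_nil : py [] = [] := rfl

@[simp] lemma dX_nil' : dX [] = 0 := rfl
@[simp] lemma dY_nil' : dY [] = 0 := rfl
@[simp] lemma eM_nil' : eM [] = 0 := rfl
@[simp] lemma rX_nil' : rX [] = 0 := rfl
@[simp] lemma rY_nil' : rY [] = 0 := rfl

lemma Phi_insX (c M) : Phi (insX c :: M) = Xi M := by
  cases h : hX M <;> simp [Phi, Xi, h] <;> try omega
lemma Phi_le_Xi (M) : Phi M ≤ Xi M := by simp only [Xi]; split <;> omega
lemma Xi_le_Phi_add_one (M) : Xi M ≤ Phi M + 1 := by simp only [Xi]; split <;> omega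
lemma Phi_cons_ge (m M) : Phi M ≤ Phi (m :: M) := by
  cases m <;> simp [Phi] <;> split <;> omega

-- lengths
lemma px_len : ∀ M, (px M).length + dY M = M.length := by
  intro M; induction M with
  | nil => simp
  | cons m M ih => cases m <;> simp <;> omega
lemma py_len : ∀ M, (py M).length + dX M = M.length := by
  intro M; induction M with
  | nil => simp
  | cons m M ih => cases m <;> simp <;> omega

-- the steal operation
def st : ℕ → List Mv → List ℕ × List Mv
  | 0, M => ([], M)
  | _+1, [] => ([], [])
  | j+1, mat c :: M => let r := st j M; (c :: r.1, insX c :: r.2)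
  | j+1, mis c c' :: M => let r := st j M; (c' :: r.1, insX c :: r.2)
  | j+1, insY c :: M => let r := st j M; (c :: r.1, r.2)
  | j+1, insX c :: M => let r := st (j+1) M; (r.1, insX c :: r.2)

@[simp] lemma st_zero (M) : st 0 M = ([], M) := by simp [st]
@[simp] lemma st_nil (j) : st (j+1) [] = ([], []) := by simp [st]
@[simp] lemma st_mat (j c M) : st (j+1) (mat c :: M) = ((st j M).1.cons c, insX c :: (st j M).2) := by simp [st]
@[simp] lemma st_mis (j c c' M) : st (j+1) (mis c c' :: M) = ((st j M).1.cons c', insX c :: (st j M).2) := by simp [st]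
@[simp] lemma st_insY (j c M) : st (j+1) (insY c :: M) = ((st j M).1.cons c, (st j M).2) := by simp [st]
@[simp] lemma st_insX (j c M) : st (j+1) (insX c :: M) = ((st (j+1) M).1, insX c :: (st (j+1) M).2) := by simp [st]

lemma st_px : ∀ j M, px (st j M).2 = px M := by
  intro j M
  induction M generalizing j with
  | nil => cases j <;> simp
  | cons m M ih =>
    cases j with
    | zero => simp
    | succ j => cases m <;> simp [ih]

lemma st_py : ∀ j M, j ≤ (py M).length → py M = (st j M).1 ++ py (st j M).2 := by
  intro j M
  induction M generalizing j with
  | nil => cases j <;> simp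
  | cons m M ih =>
    cases j with
    | zero => simp
    | succ j =>
      cases m <;> intro hj <;> simp at hj ⊢
      · exact ih j (by omega)
      · exact ih j (by omega)
      · exact ih (j+1) (by simpa using hj)
      · exact ih j (by omega)

lemma st_len1 : ∀ j M, j ≤ (py M).length → (st j M).1.length = j := by
  intro j M
  induction M generalizing j with
  | nil => cases j <;> simp
  | cons m M ih =>
    cases j with
    | zero => simp
    | succ j =>
      cases m <;> intro hj <;> simp at hj ⊢
      · exact ih j (by omega)
      · exact ih j (by omega)
      · exact ih (j+1) (by simpa using hj)
      · exact ih j (by omega)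

lemma st_len2 : ∀ j M, (st j M).2.length ≤ M.length := by
  intro j M
  induction M generalizing j with
  | nil => cases j <;> simp
  | cons m M ih =>
    cases j with
    | zero => simp
    | succ j => cases m <;> simp <;> [exact ih j; exact ih j; exact ih (j+1); exact (ih j).trans (by omega)]

lemma st_dY : ∀ j M, dY (st j M).2 ≤ dY M := by
  intro j M
  induction M generalizing j with
  | nil => cases j <;> simp
  | cons m M ih =>
    cases j with
    | zero => simp
    | succ j => cases m <;> simp <;> [exact ih j; exact ih j; exact ih (j+1); exact (ih j).trans (by omega)]

lemma st_e : ∀ j M, eM (st j M).2 ≤ eM M := by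
  intro j M
  induction M generalizing j with
  | nil => cases j <;> simp
  | cons m M ih =>
    cases j with
    | zero => simp
    | succ j => cases m <;> simp <;> [exact ih j; exact (ih j).trans (by omega); exact ih (j+1); exact ih j]

lemma st_e_mis (j c c' M) : eM (st (j+1) (mis c c' :: M)).2 < eM (mis c c' :: M) := by
  simp; exact st_e j M

lemma st_bal : ∀ j M, j ≤ (py M).length →
    dX (st j M).2 + dY M = dX M + dY (st j M).2 + j := by
  intro j M
  induction M generalizing j with
  | nil => cases j <;> simp
  | cons m M ih =>
    cases j with
    | zero => simp
    | succ j =>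
      cases m <;> intro hj <;> simp at hj ⊢
      · have := ih j (by omega); omega
      · have := ih j (by omega); omega
      · have := ih (j+1) (by simpa using hj); omega
      · have := ih j (by omega); omega

lemma Xi_insX (c Z) : Xi (insX c :: Z) = Xi Z := by
  simp [Xi, hX, Phi_insX]

lemma st_K : ∀ j M, Xi (st j M).2 ≤ Xi M := by
  intro j M
  induction M generalizing j with
  | nil => cases j <;> simp
  | cons m M ih =>
    cases j with
    | zero => simp
    | succ j =>
      cases m with
      | mat c =>
        simp only [st_mat, Xi_insX]
        refine (ih j).trans ((Xi_le_Phi_add_one M).trans ?_)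
        have := Phi_cons_ge (mat c) M
        simp [Xi, hX]; omega
      | mis c c' =>
        simp only [st_mis, Xi_insX]
        refine (ih j).trans ((Xi_le_Phi_add_one M).trans ?_)
        have : Phi (mis c c' :: M) = Phi M + 1 := by simp [Phi]; omega
        simp [Xi, hX]; omega
      | insY c =>
        simp only [st_insY]
        refine (ih j).trans ((Xi_le_Phi_add_one M).trans ?_)
        have := Phi_cons_ge (insY c) M
        simp [Xi, hX]; omega
      | insX c =>
        simp only [st_insX, Xi_insX]
        exact ih (j+1)

lemma st_C : ∀ j M, hMat M = false → Phi (st j M).2 ≤ Phi M := by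
  intro j M
  induction M generalizing j with
  | nil => cases j <;> simp
  | cons m M ih =>
    intro hm
    cases j with
    | zero => simp
    | succ j =>
      cases m with
      | mat c => simp [hMat] at hm
      | mis c c' =>
        simp only [st_mis, Phi_insX]
        refine (st_K j M).trans ((Xi_le_Phi_add_one M).trans ?_)
        simp [Phi]
      | insX c =>
        rw [st_insX]
        show Phi (insX c :: (st (j+1) M).2) ≤ _
        rw [Phi_insX, Phi_insX]
        exact st_K (j+1) M
      | insY c =>
        simp only [st_insY]
        cases hy : hY M with
        | true =>
          have hmm : hMat M = false := by
            cases M with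
            | nil => simp [hY] at hy
            | cons m' M' => cases m' <;> simp [hY, hMat] at hy ⊢
          exact (ih j hmm).trans (Phi_cons_ge _ M)
        | false =>
          have h1 : Phi (insY c :: M) = Phi M + 1 := by simp [Phi, hy]; omega
          have := (Phi_le_Xi (st j M).2).trans ((st_K j M).trans (Xi_le_Phi_add_one M))
          omega

def ismat : Mv → Bool | mat _ => true | _ => false

def takeM : List Mv → List ℕ × List Mv
  | [] => ([], [])
  | mat c :: M => (c :: (takeM M).1, (takeM M).2)
  | m :: M => ([], m :: M)

def takeX2 : List Mv → List ℕ × List Mv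
  | [] => ([], [])
  | insX c :: M => (c :: (takeX2 M).1, (takeX2 M).2)
  | m :: M => ([], m :: M)

lemma takeM_spec : ∀ M, (takeM M).1.map mat ++ (takeM M).2 = M ∧ hMat (takeM M).2 = false := by
  intro M
  induction M with
  | nil => exact ⟨rfl, rfl⟩
  | cons m M ih =>
    cases m with
    | mat c => exact ⟨by simp [takeM, ih.1], by simpa only [takeM] using ih.2⟩
    | mis c c' => exact ⟨by simp [takeM], rfl⟩
    | insX c => exact ⟨by simp [takeM], rfl⟩
    | insY c => exact ⟨by simp [takeM], rfl⟩

lemma takeX2_spec : ∀ M, (takeX2 M).1.map insX ++ (takeX2 M).2 = M ∧ hX (takeX2 M).2 = false := by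
  intro M
  induction M with
  | nil => exact ⟨rfl, rfl⟩
  | cons m M ih =>
    cases m with
    | insX c => exact ⟨by simp [takeX2, ih.1], by simpa only [takeX2] using ih.2⟩
    | mis c c' => exact ⟨by simp [takeX2], rfl⟩
    | mat c => exact ⟨by simp [takeX2], rfl⟩
    | insY c => exact ⟨by simp [takeX2], rfl⟩

-- append lemmas
lemma px_append_mats (u : List ℕ) (M) : px (u.map mat ++ M) = u ++ px M := by
  induction u with | nil => simp | cons a u ih => simp [ih]
lemma py_append_mats (u : List ℕ) (M) : py (u.map mat ++ M) = u ++ py M := by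
  induction u with | nil => simp | cons a u ih => simp [ih]
lemma px_append_insX (cs : List ℕ) (M) : px (cs.map insX ++ M) = cs ++ px M := by
  induction cs with | nil => simp | cons a u ih => simp [ih]
lemma py_append_insX (cs : List ℕ) (M) : py (cs.map insX ++ M) = py M := by
  induction cs with | nil => simp | cons a u ih => simp [ih]
lemma dX_append_mats (u : List ℕ) (M) : dX (u.map mat ++ M) = dX M := by
  induction u with | nil => simp | cons a u ih => simp [ih]
lemma dY_append_mats (u : List ℕ) (M) : dY (u.map mat ++ M) = dY M := by
  induction u with | nil => simp | cons a u ih => simp [ih]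
lemma eM_append_mats (u : List ℕ) (M) : eM (u.map mat ++ M) = eM M := by
  induction u with | nil => simp | cons a u ih => simp [ih]
lemma rX_append_mats (u : List ℕ) (M) : rX (u.map mat ++ M) = rX M := by
  induction u with | nil => simp | cons a u ih => simp [ih]
lemma rY_append_mats (u : List ℕ) (M) : rY (u.map mat ++ M) = rY M := by
  induction u with | nil => simp | cons a u ih => simp [ih]
lemma dX_append_insX (cs : List ℕ) (M) : dX (cs.map insX ++ M) = cs.length + dX M := by
  induction cs with | nil => simp | cons a u ih => simp [ih]; omega
lemma dY_append_insX (cs : List ℕ) (M) : dY (cs.map insX ++ M) = dY M := by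
  induction cs with | nil => simp | cons a u ih => simp [ih]
lemma eM_append_insX (cs : List ℕ) (M) : eM (cs.map insX ++ M) = eM M := by
  induction cs with | nil => simp | cons a u ih => simp [ih]
lemma rY_append_insX (cs : List ℕ) (M) : rY (cs.map insX ++ M) = rY M := by
  induction cs with | nil => simp | cons a u ih => simp [ih]
lemma rX_append_insX (cs : List ℕ) (M) (h : cs ≠ []) :
    rX (cs.map insX ++ M) = rX M + (if hX M then 0 else 1) := by
  induction cs with
  | nil => simp at h
  | cons a u ih =>
    rcases u with _ | ⟨b, u⟩
    · simp
    · have h3 := ih (by simp)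
      simp only [List.map_cons, List.cons_append] at h3 ⊢
      rw [rX_insX]
      have h2 : hX (insX b :: (List.map insX u ++ M)) = true := rfl
      rw [h2]
      simpa using h3

-- burst ball valid pair
lemma valid_pair (t : ℕ) (u c v h w : List ℕ) (hlen : c.length = h.length) (hct : c.length ≤ t) :
    (u ++ c ++ v ++ w).length = (u ++ v ++ h ++ w).length ∧
    (burstBall t (u ++ c ++ v ++ w) ∩ burstBall t (u ++ v ++ h ++ w)).Nonempty := by
  constructor
  · simp; omega
  · refine ⟨u ++ v ++ w, ⟨u.length, c.length, hct, ?_⟩, ⟨(u ++ v).length, h.length, by omega, ?_⟩⟩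
    · have h1 : (u ++ c ++ v ++ w).take u.length = u := by
        rw [List.append_assoc, List.append_assoc, List.take_left]
      have h2 : (u ++ c ++ v ++ w).drop (u.length + c.length) = v ++ w := by
        have : u.length + c.length = (u ++ c).length := by simp
        rw [this, List.append_assoc, List.drop_left]
      rw [h1, h2, List.append_assoc]
    · have h1 : (u ++ v ++ h ++ w).take (u ++ v).length = u ++ v := by
        rw [List.append_assoc (u ++ v), List.take_left]
      have h2 : (u ++ v ++ h ++ w).drop ((u ++ v).length + h.length) = w := by
        have : (u ++ v).length + h.length = (u ++ v ++ h).length := by simp; omega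
        rw [this, List.drop_left]
      rw [h1, h2, List.append_assoc]

-- mirror
def mir : Mv → Mv
  | mat c => mat c
  | mis c c' => mis c' c
  | insX c => insY c
  | insY c => insX c

lemma mir_px : ∀ M, px (M.map mir) = py M := by
  intro M; induction M with
  | nil => rfl
  | cons m M ih => cases m <;> simp [mir, ih]
lemma mir_py : ∀ M, py (M.map mir) = px M := by
  intro M; induction M with
  | nil => rfl
  | cons m M ih => cases m <;> simp [mir, ih]
lemma mir_dX : ∀ M, dX (M.map mir) = dY M := by
  intro M; induction M with
  | nil => rfl
  | cons m M ih => cases m <;> simp [mir, ih, isX, isY]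
lemma mir_dY : ∀ M, dY (M.map mir) = dX M := by
  intro M; induction M with
  | nil => rfl
  | cons m M ih => cases m <;> simp [mir, ih, isX, isY]
lemma mir_eM : ∀ M, eM (M.map mir) = eM M := by
  intro M; induction M with
  | nil => rfl
  | cons m M ih => cases m <;> simp [mir, ih, ismis]
lemma mir_hX : ∀ M, hX (M.map mir) = hY M := by
  intro M; cases M with
  | nil => rfl
  | cons m M => cases m <;> rfl
lemma mir_hY : ∀ M, hY (M.map mir) = hX M := by
  intro M; cases M with
  | nil => rfl
  | cons m M => cases m <;> rfl
lemma mir_rX : ∀ M, rX (M.map mir) = rY M := by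
  intro M; induction M with
  | nil => rfl
  | cons m M ih => cases m <;> simp [mir, ih, mir_hX, mir_hY]
lemma mir_rY : ∀ M, rY (M.map mir) = rX M := by
  intro M; induction M with
  | nil => rfl
  | cons m M ih => cases m <;> simp [mir, ih, mir_hX, mir_hY]
lemma mir_Phi (M) : Phi (M.map mir) = Phi M := by
  simp [Phi, mir_rX, mir_rY, mir_eM]; omega

def Out (t : ℕ) (M : List Mv) : Prop := ∃ xs ys : List (List ℕ),
  xs.length = ys.length ∧ px M = xs.flatten ∧ py M = ys.flatten ∧
  1 ≤ xs.length ∧ xs.length ≤ max 1 (Phi M - (if 1 ≤ dX M then 1 else 0)) ∧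
  ∀ p ∈ xs.zip ys, p.1.length = p.2.length ∧ (burstBall t p.1 ∩ burstBall t p.2).Nonempty

lemma out_mir (t M) (hbal : dX M = dY M) (h : Out t (M.map mir)) : Out t M := by
  obtain ⟨xs, ys, hl, hx, hy, h1, h2, h3⟩ := h
  rw [mir_px] at hx
  rw [mir_py] at hy
  refine ⟨ys, xs, hl.symm, hy, hx, by omega, ?_, ?_⟩
  · rw [hl] at h2
    rw [mir_Phi, mir_dX, ← hbal] at h2
    exact h2
  · intro p hp
    have hp2 : (p.2, p.1) ∈ xs.zip ys := by
      rw [← List.zip_swap ys xs]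
      exact List.mem_map_of_mem (f := Prod.swap) hp
    obtain ⟨ha, hb⟩ := h3 _ hp2
    exact ⟨ha.symm, by rwa [Set.inter_comm]⟩

lemma rX_le_dX : ∀ M, rX M ≤ dX M := by
  intro M; induction M with
  | nil => simp
  | cons m M ih =>
    cases m with
    | mat c => simpa using ih
    | mis c c' => simpa using ih
    | insY c => simpa using ih
    | insX c => simp only [rX_insX, dX_insX]; split <;> omega

lemma rX_pos : ∀ M, 1 ≤ dX M → 1 ≤ rX M := by
  intro M; induction M with
  | nil => simp
  | cons m M ih =>
    intro h
    cases m with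
    | mat c => simp at h ⊢; exact ih h
    | mis c c' => simp at h ⊢; exact ih h
    | insY c => simp at h ⊢; exact ih h
    | insX c =>
      rw [rX_insX]
      cases hh : hX M with
      | false => simp
      | true =>
        have hd : 1 ≤ dX M := by
          cases M with
          | nil => simp [hX] at hh
          | cons m' M' => cases m' <;> simp [hX] at hh <;> simp
        have := ih hd; omega

lemma rY_le_dY (M) : rY M ≤ dY M := by
  have := rX_le_dX (M.map mir)
  rwa [mir_rX, mir_dX] at this

lemma rY_pos (M) (h : 1 ≤ dY M) : 1 ≤ rY M := by
  have := rX_pos (M.map mir) (by rwa [mir_dX])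
  rwa [mir_rX] at this

lemma px_eq_py : ∀ M, dX M = 0 → dY M = 0 → eM M = 0 → px M = py M := by
  intro M
  induction M with
  | nil => intros; rfl
  | cons m M ih =>
    intro h1 h2 h3
    cases m with
    | mat c => simp at h1 h2 h3 ⊢; exact ih h1 h2 h3
    | mis c c' => simp at h3
    | insX c => simp at h1
    | insY c => simp at h2

lemma Phi_pos (M : List Mv) (h1 : hMat M = false) (h2 : M ≠ []) : 1 ≤ Phi M := by
  cases M with
  | nil => simp at h2
  | cons m M' =>
    cases m with
    | mat c => simp [hMat] at h1
    | mis c c' => have : 1 ≤ eM (mis c c' :: M') := by simp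
                  simp only [Phi]; omega
    | insX c =>
      have := rX_pos (insX c :: M') (by simp)
      simp only [Phi]; omega
    | insY c =>
      have := rY_pos (insY c :: M') (by simp)
      simp only [Phi]; omega

lemma stepX (t L : ℕ) (ht : 1 ≤ t)
    (IH : ∀ N : List Mv, N.length ≤ L → dX N = dY N → dX N ≤ t → Out t N)
    (M : List Mv) (hlen : M.length ≤ L + 1) (hbal : dX M = dY M) (hdt : dX M ≤ t)
    (u : List ℕ) (c : ℕ) (M₂ : List Mv) (hM : M = u.map mat ++ insX c :: M₂) :
    Out t M := by
  obtain ⟨hx2, hhx2⟩ := takeX2_spec M₂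
  obtain ⟨hm2, hhm2⟩ := takeM_spec (takeX2 M₂).2
  set cs : List ℕ := c :: (takeX2 M₂).1 with hcs_def
  set v : List ℕ := (takeM (takeX2 M₂).2).1 with hv_def
  set M' : List Mv := (takeM (takeX2 M₂).2).2 with hM'_def
  have hMdec : M = u.map mat ++ (cs.map insX ++ (v.map mat ++ M')) := by
    rw [hM]
    congr 1
    rw [hcs_def, List.map_cons, List.cons_append, hm2, hx2]
  have hvX : hX (v.map mat ++ M') = false := by
    cases hv : v with
    | nil =>
      have hme : M' = (takeX2 M₂).2 := by rw [← hm2, hv]; simp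
      simp only [hv, List.map_nil, List.nil_append]
      rw [hme]; exact hhx2
    | cons a v' => rfl
  have hpx : px M = u ++ (cs ++ (v ++ px M')) := by
    rw [hMdec, px_append_mats, px_append_insX, px_append_mats]
  have hpy : py M = u ++ (v ++ py M') := by
    rw [hMdec, py_append_mats, py_append_insX, py_append_mats]
  have hdX : dX M = cs.length + dX M' := by
    rw [hMdec, dX_append_mats, dX_append_insX, dX_append_mats]
  have hdY : dY M = dY M' := by
    rw [hMdec, dY_append_mats, dY_append_insX, dY_append_mats]
  have heM : eM M = eM M' := by
    rw [hMdec, eM_append_mats, eM_append_insX, eM_append_mats]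
  have hrX : rX M = rX M' + 1 := by
    rw [hMdec, rX_append_mats, rX_append_insX _ _ (by simp [hcs_def]), hvX, rX_append_mats]
    simp
  have hrY : rY M = rY M' := by
    rw [hMdec, rY_append_mats, rY_append_insX, rY_append_mats]
  have hPhi : Phi M = Phi M' + 1 := by
    simp only [Phi, hrX, hrY, heM]; omega
  have hj1 : 1 ≤ cs.length := by simp [hcs_def]
  have hdXM : 1 ≤ dX M := by omega
  have hjt : cs.length ≤ t := by omega
  have hM'ne : M' ≠ [] := by
    intro h
    rw [h] at hdY
    simp at hdY
    omega
  have hjy : cs.length ≤ (py M').length := by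
    have e1 := px_len M
    have e2 := py_len M
    have e3 : (px M).length = (py M).length := by omega
    rw [hpx, hpy] at e3
    simp only [List.length_append] at e3
    omega
  obtain ⟨hv2, M₁, hst⟩ : ∃ a b, st cs.length M' = (a, b) := ⟨_, _, rfl⟩
  have hpy' : py M' = hv2 ++ py M₁ := by
    have := st_py cs.length M' hjy; rwa [hst] at this
  have hh1 : hv2.length = cs.length := by
    have := st_len1 cs.length M' hjy; rwa [hst] at this
  have hpxM₁ : px M₁ = px M' := by
    have := st_px cs.length M'; rwa [hst] at this
  have hbal₁ : dX M₁ = dY M₁ := by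
    have := st_bal cs.length M' hjy
    rw [hst] at this
    simp only [] at this
    omega
  have hdY₁ : dY M₁ ≤ dY M' := by
    have := st_dY cs.length M'; rwa [hst] at this
  have hdt₁ : dX M₁ ≤ t := by omega
  have hlenM : M.length = u.length + (cs.length + (v.length + M'.length)) := by
    rw [hMdec]; simp
  have hlen' : M'.length ≤ L := by omega
  have hlen₁ : M₁.length ≤ L := by
    have := st_len2 cs.length M'; rw [hst] at this; exact le_trans this hlen'
  have hMatM' : hMat M' = false := hhm2
  have hPhiM' : 1 ≤ Phi M' := Phi_pos M' hMatM' hM'ne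
  have hPhiM₁ : Phi M₁ ≤ Phi M' := by
    have := st_C cs.length M' hMatM'; rwa [hst] at this
  have heM₁ : eM M₁ ≤ eM M' := by
    have := st_e cs.length M'; rwa [hst] at this
  by_cases hA : dX M₁ = 0 ∧ eM M₁ = 0
  · -- single block, absorb the all-match remainder
    have hdY₁0 : dY M₁ = 0 := by omega
    have hpq : px M₁ = py M₁ := px_eq_py M₁ hA.1 hdY₁0 hA.2
    obtain ⟨hL, hB⟩ := valid_pair t u cs v hv2 (px M') hh1.symm hjt
    refine ⟨[u ++ cs ++ v ++ px M'], [u ++ v ++ hv2 ++ px M'], rfl, ?_, ?_, by simp, by simp, ?_⟩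
    · rw [hpx]; simp [List.append_assoc]
    · rw [hpy, hpy']
      have : py M₁ = px M' := by rw [← hpq, hpxM₁]
      rw [this]
      simp [List.append_assoc]
    · intro p hp
      simp only [List.zip_cons_cons, List.zip_nil_right, List.mem_singleton] at hp
      subst hp
      exact ⟨hL, hB⟩
  · -- emit block and recurse
    obtain ⟨xs₁, ys₁, hl₁, hxf, hyf, hm1, hmB, hval⟩ := IH M₁ hlen₁ hbal₁ hdt₁
    obtain ⟨hL, hB⟩ := valid_pair t u cs v hv2 [] hh1.symm hjt
    simp only [List.append_nil] at hL hB
    refine ⟨(u ++ cs ++ v) :: xs₁, (u ++ v ++ hv2) :: ys₁, by simp [hl₁], ?_, ?_, by simp, ?_, ?_⟩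
    · rw [hpx]
      have : px M' = xs₁.flatten := by rw [← hpxM₁, hxf]
      simp [this, List.append_assoc]
    · rw [hpy, hpy', hyf]
      simp [List.append_assoc]
    · -- the counting bound
      have hgoal : xs₁.length + 1 ≤ max 1 (Phi M - if 1 ≤ dX M then 1 else 0) := by
        rw [if_pos hdXM]
        have hmax : Phi M - 1 ≥ 1 := by omega
        rw [Nat.max_eq_right hmax]
        by_cases hdx1 : 1 ≤ dX M₁
        · have hrx1 : 1 ≤ rX M₁ := rX_pos M₁ hdx1
          have hry1 : 1 ≤ rY M₁ := rY_pos M₁ (by omega)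
          have h2' : 2 ≤ Phi M₁ := by simp only [Phi]; omega
          have : max 1 (Phi M₁ - 1) = Phi M₁ - 1 := by
            exact Nat.max_eq_right (by omega)
          rw [if_pos hdx1, this] at hmB
          omega
        · have hdx0 : dX M₁ = 0 := by omega
          have hem1 : 1 ≤ eM M₁ := by
            rcases Nat.eq_zero_or_pos (eM M₁) with h | h
            · exact absurd ⟨hdx0, h⟩ hA
            · exact h
          have hrx0 : rX M₁ = 0 := by have := rX_le_dX M₁; omega
          have hry0 : rY M₁ = 0 := by have := rY_le_dY M₁; omega
          have hPhiE : Phi M₁ = eM M₁ := by simp only [Phi]; omega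
          have hkey : eM M₁ + 1 ≤ Phi M' := by
            cases hM'c : M' with
            | nil => exact absurd hM'c hM'ne
            | cons m' M'' =>
              rw [hM'c] at heM₁
              cases m' with
              | mat a => rw [hM'c] at hMatM'; simp [hMat] at hMatM'
              | insX a =>
                have h1 : 1 ≤ rX (insX a :: M'') := rX_pos _ (by simp)
                simp only [Phi]; omega
              | insY a =>
                have h1 : 1 ≤ rY (insY a :: M'') := rY_pos _ (by simp)
                simp only [Phi]; omega
              | mis a b =>
                obtain ⟨j', hj'⟩ : ∃ j', cs.length = j' + 1 :=
                  ⟨cs.length - 1, by omega⟩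
                have hst2 := st_e_mis j' a b M''
                rw [← hM'c, ← hj'] at hst2
                have heq : (st cs.length M').2 = M₁ := by rw [hst]
                rw [heq, hM'c] at hst2
                simp only [Phi]
                omega
          rw [if_neg (by omega), Nat.max_eq_right (by omega)] at hmB
          omega
      simpa using hgoal
    · intro p hp
      rw [List.zip_cons_cons] at hp
      rcases List.mem_cons.mp hp with h | h
      · subst h; exact ⟨hL, hB⟩
      · exact hval _ h

lemma map_mat_mir (l : List ℕ) : (l.map mat).map mir = l.map mat := by
  induction l with
  | nil => rfl
  | cons a l ih => simp [mir, ih]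

lemma main (t : ℕ) (ht : 1 ≤ t) :
    ∀ L M, M.length ≤ L → dX M = dY M → dX M ≤ t → Out t M := by
  intro L
  induction L with
  | zero =>
    intro M hlen _ _
    have hM : M = [] := List.length_eq_zero_iff.mp (by omega)
    subst hM
    refine ⟨[[]], [[]], rfl, by simp, by simp, by simp, by simp, ?_⟩
    intro p hp
    simp only [List.zip_cons_cons, List.zip_nil_right, List.mem_singleton] at hp
    subst hp
    exact ⟨rfl, ⟨[], ⟨0, 0, by simp⟩, ⟨0, 0, by simp⟩⟩⟩
  | succ L IH =>
    intro M hlen hbal hdt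
    obtain ⟨u, K, hM, hMat'⟩ : ∃ (u : List ℕ) (K : List Mv), M = u.map mat ++ K ∧ hMat K = false :=
      ⟨_, _, (takeM_spec M).1.symm, (takeM_spec M).2⟩
    subst hM
    cases K with
    | nil =>
      refine ⟨[u], [u], rfl, by simpa using px_append_mats u [],
        by simpa using py_append_mats u [], by simp, by simp, ?_⟩
      intro p hp
      simp only [List.zip_cons_cons, List.zip_nil_right, List.mem_singleton] at hp
      subst hp
      exact ⟨rfl, ⟨u, ⟨0, 0, by simp⟩, ⟨0, 0, by simp⟩⟩⟩
    | cons E M₂ =>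
      cases E with
      | mat a => simp [hMat] at hMat'
      | insX a => exact stepX t L ht IH _ hlen hbal hdt u a M₂ rfl
      | insY a =>
        refine out_mir t _ hbal (stepX t L ht IH ((u.map mat ++ insY a :: M₂).map mir)
          (by simpa using hlen)
          (by rw [mir_dX, mir_dY]; omega) (by rw [mir_dX]; omega) u a (M₂.map mir) ?_)
        simp only [List.map_append, List.map_cons, map_mat_mir]
        rfl
      | mis a b =>
        set M : List Mv := u.map mat ++ mis a b :: M₂ with hMdef
        have hMeq : M = u.map mat ++ mis a b :: M₂ := rfl
        have hdX2 : dX M = dX M₂ := by rw [hMeq, dX_append_mats]; simp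
        have hdY2 : dY M = dY M₂ := by rw [hMeq, dY_append_mats]; simp
        have heM2 : eM M = eM M₂ + 1 := by rw [hMeq, eM_append_mats]; simp
        have hrX2 : rX M = rX M₂ := by rw [hMeq, rX_append_mats]; simp
        have hrY2 : rY M = rY M₂ := by rw [hMeq, rY_append_mats]; simp
        have hPhi2 : Phi M = Phi M₂ + 1 := by simp only [Phi]; omega
        have hpx : px M = u ++ (a :: px M₂) := by rw [hMeq, px_append_mats]; simp
        have hpy : py M = u ++ (b :: py M₂) := by rw [hMeq, py_append_mats]; simp
        have hlen2 : M₂.length ≤ L := by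
          have : M.length = u.length + (M₂.length + 1) := by rw [hMeq]; simp
          omega
        by_cases hA : dX M₂ = 0 ∧ eM M₂ = 0
        · have hdY0 : dY M₂ = 0 := by omega
          have hpq : px M₂ = py M₂ := px_eq_py M₂ hA.1 hdY0 hA.2
          obtain ⟨hL, hB⟩ := valid_pair t u [a] [] [b] (px M₂) rfl ht
          simp only [List.append_nil, List.nil_append] at hL hB
          refine ⟨[u ++ [a] ++ px M₂], [u ++ [b] ++ px M₂],
            rfl, ?_, ?_, by simp, by simp, ?_⟩
          · rw [hpx]; simp
          · rw [hpy, ← hpq]; simp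
          · intro p hp
            simp only [List.zip_cons_cons, List.zip_nil_right, List.mem_singleton] at hp
            subst hp
            exact ⟨hL, hB⟩
        · obtain ⟨xs₁, ys₁, hl₁, hxf, hyf, hm1, hmB, hval⟩ :=
            IH M₂ hlen2 (by omega) (by omega)
          obtain ⟨hL, hB⟩ := valid_pair t u [a] [] [b] [] rfl ht
          simp only [List.append_nil, List.nil_append] at hL hB
          refine ⟨(u ++ [a]) :: xs₁, (u ++ [b]) :: ys₁,
            by simp [hl₁], ?_, ?_, by simp, ?_, ?_⟩
          · rw [hpx, hxf]; simp
          · rw [hpy, hyf]; simp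
          · -- bound
            have hPhi1 : 1 ≤ Phi M₂ := by
              rcases Nat.eq_zero_or_pos (dX M₂) with h | h
              · have he : 1 ≤ eM M₂ := by
                  rcases Nat.eq_zero_or_pos (eM M₂) with h' | h'
                  · exact absurd ⟨h, h'⟩ hA
                  · exact h'
                simp only [Phi]; omega
              · have := rX_pos M₂ h
                simp only [Phi]; omega
            simp only [List.length_cons]
            by_cases hd : 1 ≤ dX M
            · have h2 : 2 ≤ Phi M₂ := by
                have := rX_pos M₂ (by omega)
                have := rY_pos M₂ (by omega)
                simp only [Phi]; omega
              rw [if_pos hd]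
              rw [if_pos (by omega : 1 ≤ dX M₂), Nat.max_eq_right (by omega)] at hmB
              rw [Nat.max_eq_right (by omega)]
              omega
            · rw [if_neg hd]
              rw [if_neg (by omega), Nat.max_eq_right (by omega)] at hmB
              rw [Nat.max_eq_right (by omega)]
              omega
          · intro p hp
            rw [List.zip_cons_cons] at hp
            rcases List.mem_cons.mp hp with h | h
            · subst h
              exact ⟨hL, hB⟩
            · exact hval _ h

def pr (a b : ℕ) : Mv := if a = b then mat a else mis a b

@[simp] lemma px_pr (a b M) : px (pr a b :: M) = a :: px M := by
  unfold pr; split <;> simp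
@[simp] lemma py_pr (a b M) : py (pr a b :: M) = b :: py M := by
  unfold pr
  split
  · subst ‹a = b›; simp
  · simp
@[simp] lemma dX_pr (a b M) : dX (pr a b :: M) = dX M := by
  unfold pr; split <;> simp
@[simp] lemma dY_pr (a b M) : dY (pr a b :: M) = dY M := by
  unfold pr; split <;> simp
@[simp] lemma eM_pr (a b M) : eM (pr a b :: M) = (if a = b then 0 else 1) + eM M := by
  unfold pr; split <;> simp <;> omega

def mk : List ℕ → List ℕ → List ℕ → List ℕ → List Mv
  | w, a :: x', v, y =>
    if w.head? = some a then
      match y with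
      | b :: y' =>
        if v.head? = some b then pr a b :: mk w.tail x' v.tail y'
        else insY b :: mk w (a :: x') v y'
      | [] => []
    else insX a :: mk w x' v y
  | _, [], _, y => y.map insY
termination_by w x v y => x.length + y.length

lemma mk_nil_x (w v y : List ℕ) : mk w [] v y = y.map insY := by
  rw [mk.eq_def]

lemma mk_eq_insX (w : List ℕ) (a : ℕ) (x' v y : List ℕ) (h : ¬ w.head? = some a) :
    mk w (a :: x') v y = insX a :: mk w x' v y := by
  rw [mk.eq_def]; simp [h]

lemma mk_eq_insY (w : List ℕ) (a : ℕ) (x' v : List ℕ) (b : ℕ) (y' : List ℕ)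
    (h : w.head? = some a) (h2 : ¬ v.head? = some b) :
    mk w (a :: x') v (b :: y') = insY b :: mk w (a :: x') v y' := by
  rw [mk.eq_def]; simp [h, h2]

lemma mk_eq_pr (w : List ℕ) (a : ℕ) (x' v : List ℕ) (b : ℕ) (y' : List ℕ)
    (h : w.head? = some a) (h2 : v.head? = some b) :
    mk w (a :: x') v (b :: y') = pr a b :: mk w.tail x' v.tail y' := by
  rw [mk.eq_def]; simp [h, h2]

lemma px_mapinsY (y : List ℕ) : px (y.map insY) = [] := by
  induction y with | nil => rfl | cons b y ih => simpa using ih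
lemma py_mapinsY (y : List ℕ) : py (y.map insY) = y := by
  induction y with | nil => rfl | cons b y ih => simp [ih]
lemma dX_mapinsY (y : List ℕ) : dX (y.map insY) = 0 := by
  induction y with | nil => rfl | cons b y ih => simpa using ih
lemma dY_mapinsY (y : List ℕ) : dY (y.map insY) = y.length := by
  induction y with | nil => rfl | cons b y ih => simp [ih]; try omega
lemma eM_mapinsY (y : List ℕ) : eM (y.map insY) = 0 := by
  induction y with | nil => rfl | cons b y ih => simpa using ih

lemma sublist_tail_of_head_ne {v : List ℕ} {b : ℕ} {y' : List ℕ}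
    (h : v.Sublist (b :: y')) (hne : v.head? ≠ some b) : v.Sublist y' := by
  cases h with
  | cons _ h => exact h
  | cons_cons _ h => simp at hne

lemma mk_spec : ∀ n (w x v y : List ℕ), x.length + y.length ≤ n →
    w.Sublist x → v.Sublist y → w.length = v.length →
    px (mk w x v y) = x ∧ py (mk w x v y) = y ∧
    dX (mk w x v y) + w.length = x.length ∧ dY (mk w x v y) + v.length = y.length ∧
    eM (mk w x v y) = (w.zip v).countP (fun p => p.1 != p.2) := by
  intro n
  induction n with
  | zero =>
    intro w x v y hn hw hv hl
    have hx : x = [] := List.length_eq_zero_iff.mp (by omega)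
    have hy : y = [] := List.length_eq_zero_iff.mp (by omega)
    subst hx; subst hy
    have hw' : w = [] := List.sublist_nil.mp hw
    have hv' : v = [] := List.sublist_nil.mp hv
    subst hw'; subst hv'
    rw [mk_nil_x]
    simp
  | succ n IH =>
    intro w x v y hn hw hv hl
    cases x with
    | nil =>
      have hw' : w = [] := List.sublist_nil.mp hw
      subst hw'
      have hv' : v = [] := List.length_eq_zero_iff.mp (by simp at hl; omega)
      subst hv'
      rw [mk_nil_x]
      simp [px_mapinsY, py_mapinsY, dX_mapinsY, dY_mapinsY, eM_mapinsY]
    | cons a x' =>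
      by_cases hwa : w.head? = some a
      · obtain ⟨w', hw'⟩ : ∃ w', w = a :: w' := by
          cases w with
          | nil => simp at hwa
          | cons c w' => simp at hwa; subst hwa; exact ⟨w', rfl⟩
        subst hw'
        have hwx : w'.Sublist x' := by
          have := hw
          rw [List.cons_sublist_cons] at this
          exact this
        cases y with
        | nil =>
          have : v = [] := List.sublist_nil.mp hv
          subst this
          simp at hl
        | cons b y' =>
          by_cases hvb : v.head? = some b
          · obtain ⟨v', hv'⟩ : ∃ v', v = b :: v' := by
              cases v with
              | nil => simp at hvb
              | cons c v' => simp at hvb; subst hvb; exact ⟨v', rfl⟩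
            subst hv'
            have hvy : v'.Sublist y' := by
              have := hv
              rw [List.cons_sublist_cons] at this
              exact this
            have hmk : mk (a :: w') (a :: x') (b :: v') (b :: y')
                = pr a b :: mk w' x' v' y' := by
              rw [mk_eq_pr _ _ _ _ _ _ (by simp) (by simp)]
              rfl
            obtain ⟨h1, h2, h3, h4, h5⟩ := IH w' x' v' y' (by simp at hn ⊢; omega)
              hwx hvy (by simpa using hl)
            rw [hmk]
            refine ⟨by simp [h1], by simp [h2], by simp; omega, by simp; omega, ?_⟩
            simp [h5, List.countP_cons]
            rcases Nat.decEq a b with h | h <;> simp [h, bne] <;> omega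
          · have hvy : v.Sublist y' := sublist_tail_of_head_ne hv hvb
            have hmk : mk (a :: w') (a :: x') v (b :: y')
                = insY b :: mk (a :: w') (a :: x') v y' := by
              rw [mk_eq_insY _ _ _ _ _ _ (by simp) hvb]
            obtain ⟨h1, h2, h3, h4, h5⟩ := IH (a :: w') (a :: x') v y'
              (by simp at hn ⊢; omega) hw hvy hl
            rw [hmk]
            exact ⟨by simp [h1], by simp [h2], by simpa using h3,
              by simp [h4]; omega, by simpa using h5⟩
      · have hwx : w.Sublist x' := sublist_tail_of_head_ne hw hwa
        have hmk : mk w (a :: x') v y = insX a :: mk w x' v y :=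
          mk_eq_insX _ _ _ _ _ hwa
        obtain ⟨h1, h2, h3, h4, h5⟩ := IH w x' v y (by simp at hn ⊢; omega) hwx hv hl
        rw [hmk]
        exact ⟨by simp [h1], by simp [h2], by simp; omega, by simpa using h4, by simpa using h5⟩

lemma ham_tri : ∀ (a b c : List ℕ), a.length = c.length → b.length = c.length →
    (a.zip b).countP (fun p => p.1 != p.2) ≤
      (a.zip c).countP (fun p => p.1 != p.2) + (b.zip c).countP (fun p => p.1 != p.2) := by
  have hite : ∀ u v : ℕ, (if (u != v) = true then 1 else 0) = (if u = v then 0 else 1) := by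
    intro u v; by_cases h : u = v <;> simp [h]
  intro a
  induction a with
  | nil => intro b c _ _; simp
  | cons x a ih =>
    intro b c h1 h2
    cases c with
    | nil => simp at h1
    | cons z c =>
      cases b with
      | nil => simp at h2
      | cons y b =>
        simp only [List.zip_cons_cons, List.countP_cons]
        have h3 := ih b c (by simpa using h1) (by simpa using h2)
        rw [hite x y, hite x z, hite y z]
        split_ifs <;> omega

end Stmt0Aux

open Stmt0Aux in
/-- Theorem 1, partitioning for `t` deletions and `s` substitutions.
If the `t`-deletion `s`-substitution balls of `x, y ∈ Σ_q^n` intersect, then `x` and `y`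
can be partitioned into `m ≤ 2t + 2s - 1` consecutive substrings of matching lengths
whose `≤t`-burst-deletion balls pairwise intersect. -/
theorem stmt0 (q n t s : ℕ) (hq : 2 ≤ q) (ht : 1 ≤ t)
    (x y : List ℕ) (hxn : x.length = n) (hyn : y.length = n)
    (hxq : ∀ a ∈ x, a < q) (hyq : ∀ a ∈ y, a < q)
    (hint : (ball q t s x ∩ ball q t s y).Nonempty) :
    ∃ (m : ℕ) (xs ys : List (List ℕ)),
      1 ≤ m ∧ m ≤ 2 * t + 2 * s - 1 ∧
      xs.length = m ∧ ys.length = m ∧ x = xs.flatten ∧ y = ys.flatten ∧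
      ∀ p ∈ xs.zip ys,
        p.1.length = p.2.length ∧ (burstBall t p.1 ∩ burstBall t p.2).Nonempty := by
  obtain ⟨z, hzx, hzy⟩ := hint
  obtain ⟨w, hwdel, hwz⟩ := hzx
  obtain ⟨v, hvdel, hvz⟩ := hzy
  obtain ⟨hwsub, hwlen⟩ := hwdel
  obtain ⟨hvsub, hvlen⟩ := hvdel
  obtain ⟨hzwlen, _, hwham⟩ := hwz
  obtain ⟨hzvlen, _, hvham⟩ := hvz
  have hlw : w.length = v.length := by omega
  obtain ⟨hpx, hpy, hdx, hdy, hem⟩ :=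
    mk_spec (x.length + y.length) w x v y le_rfl hwsub hvsub hlw
  have hdxt : dX (mk w x v y) = t := by omega
  have hbal : dX (mk w x v y) = dY (mk w x v y) := by omega
  have hemb : eM (mk w x v y) ≤ 2 * s := by
    rw [hem]
    have h1 : w.length = z.length := by omega
    have h2 : v.length = z.length := by omega
    have := ham_tri w v z h1 h2
    -- (w.zip z) and (v.zip z) counts bounded by s
    omega
  obtain ⟨xs, ys, hlxy, hxf, hyf, hm1, hmB, hval⟩ :=
    main t ht (mk w x v y).length (mk w x v y) le_rfl hbal (by omega)
  refine ⟨xs.length, xs, ys, hm1, ?_, rfl, hlxy.symm, by rw [← hpx, hxf], by rw [← hpy, hyf], hval⟩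
  rw [if_pos (by omega : 1 ≤ dX (mk w x v y))] at hmB
  have hphi : Phi (mk w x v y) ≤ 2 * t + 2 * s := by
    have := rX_le_dX (mk w x v y)
    have := rY_le_dY (mk w x v y)
    simp only [Phi]
    omega
  have : max 1 (Phi (mk w x v y) - 1) ≤ 2 * t + 2 * s - 1 := by
    apply max_le <;> omega
  omega
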